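/- Fix an integer N ≥ 3 and set θ_i = 2πi/N for i = 0, …, N−1. Let P = {i : cos θ_i > 0}, S_c = ∑_{i ∈ P} cos²θ_i, and S_s = ∑_{i=1}^{N−1} sin²θ_i. Suppose V₀ > 0, V_i = 0 for i ≠ 0, and 0 < δ < min(1/S_c, 1/S_s). Let r̄ be the stationary bump solution with m̄ = V₀/(1 − δ S_c), r̄_0 = δ m̄ + V₀, r̄_j = δ m̄ cos θ_j for j ∈ P \ {0}, and r̄_j = 0 for j ∉ P. Then r̄ is locally asymptotically stable: there exists an open neighborhood U of r̄ in ℝ^N such that every differentiable solution r : [0, ∞) → ℝ^N of the N-dimensional ring system with r(0) ∈ U satisfies r(t) → r̄ as t → ∞. -/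

import Mathlib

/-!
The coupling matrix is `cos (θ_i - θ_j) = c_i c_j + s_i s_j` with `c = cos θ`, `s = sin θ`
orthogonal of squared length `N / 2` (the sums of `e^{2iθ_j}` vanish for `N ≥ 3`), so it has
`ℓ²` operator norm `N / 2 = S_s`, and `r ↦ max (δ W r + V) 0` is a contraction with constant
`δ S_s < 1`. The bump is its fixed point: its first cosine moment is `m` because
`m = δ m S_c + V₀`, and its sine moment vanishes by the reflection `i ↦ -i`. For a contraction
`G` with fixed point `x`, a solution of `r' = -r + G r` satisfies
`‖r t - x‖ ≤ e^{(K-1) t} ‖r 0 - x‖` by Gronwall applied to `e^t (r t - x)`; so the bump is in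
fact globally attracting.
-/

open Real Filter

section Contraction

variable {E : Type*} [NormedAddCommGroup E] [NormedSpace ℝ E]

/-- `e^t (r t - x)` has derivative `e^t (G (r t) - x)`, of norm at most `K` times its own, so
Gronwall bounds it by `e^{K t} ‖r 0 - x‖`. -/
theorem norm_sub_le_of_hasDerivAt_neg_add_contraction {G : E → E} {x : E} {K : ℝ}
    (hG : ∀ y, ‖G y - x‖ ≤ K * ‖y - x‖) {r : ℝ → E}
    (hr : ∀ t ≥ 0, HasDerivAt r (-r t + G (r t)) t) {T : ℝ} (hT : 0 ≤ T) :
    ‖r T - x‖ ≤ ‖r 0 - x‖ * exp ((K - 1) * T) := by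
  set u : ℝ → E := fun t => exp t • (r t - x)
  have hu : ∀ t ≥ 0, HasDerivAt u (exp t • (G (r t) - x)) t := fun t ht => by
    refine ((hasDerivAt_exp t).smul ((hr t ht).sub_const x)).congr_deriv ?_
    rw [← smul_add]
    abel_nf
  have hu' : ∀ t ≥ 0, ‖exp t • (G (r t) - x)‖ ≤ K * ‖u t‖ + 0 := fun t _ => by
    simp only [u, norm_smul, norm_of_nonneg (exp_pos t).le, add_zero]
    nlinarith [hG (r t), exp_pos t]
  have hgron := norm_le_gronwallBound_of_norm_deriv_right_le
    (fun t ht => (hu t ht.1).continuousAt.continuousWithinAt)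
    (fun t ht => (hu t ht.1).hasDerivWithinAt) le_rfl (fun t ht => hu' t ht.1) T ⟨hT, le_rfl⟩
  simp only [u, gronwallBound_ε0, sub_zero, exp_zero, one_smul, norm_smul,
    norm_of_nonneg (exp_pos _).le] at hgron
  calc ‖r T - x‖ = exp (-T) * (exp T * ‖r T - x‖) := by
        rw [← mul_assoc, ← exp_add, neg_add_cancel, exp_zero, one_mul]
    _ ≤ exp (-T) * (‖r 0 - x‖ * exp (K * T)) := by gcongr
    _ = ‖r 0 - x‖ * exp ((K - 1) * T) := by
        rw [mul_left_comm, ← exp_add]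
        ring_nf

theorem tendsto_of_hasDerivAt_neg_add_contraction {G : E → E} {x : E} {K : ℝ} (hK : K < 1)
    (hG : ∀ y, ‖G y - x‖ ≤ K * ‖y - x‖) {r : ℝ → E}
    (hr : ∀ t ≥ 0, HasDerivAt r (-r t + G (r t)) t) :
    Tendsto r atTop (nhds x) := by
  rw [tendsto_iff_norm_sub_tendsto_zero]
  have hdecay : Tendsto (fun t => ‖r 0 - x‖ * exp ((K - 1) * t)) atTop (nhds 0) := by
    simpa using (tendsto_exp_atBot.comp
      (tendsto_id.const_mul_atTop_of_neg (sub_neg.2 hK))).const_mul ‖r 0 - x‖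
  exact squeeze_zero' (Eventually.of_forall fun t => norm_nonneg _)
    ((eventually_ge_atTop 0).mono fun t ht =>
      norm_sub_le_of_hasDerivAt_neg_add_contraction hG hr ht) hdecay

end Contraction

section RankTwo

variable {ι : Type*} [Fintype ι] {c s : ι → ℝ} {μ : ℝ}

theorem sum_sq_mul_add_mul (hcc : ∑ i, c i ^ 2 = μ) (hss : ∑ i, s i ^ 2 = μ)
    (hcs : ∑ i, c i * s i = 0) (a b : ℝ) :
    ∑ i, (c i * a + s i * b) ^ 2 = μ * (a ^ 2 + b ^ 2) := by
  have hexpand : ∀ i, (c i * a + s i * b) ^ 2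
      = a ^ 2 * c i ^ 2 + 2 * a * b * (c i * s i) + b ^ 2 * s i ^ 2 := fun i => by ring
  simp only [hexpand, Finset.sum_add_distrib, ← Finset.mul_sum, hcc, hss, hcs]
  ring

theorem sq_add_sq_sum_mul_le (hcc : ∑ i, c i ^ 2 = μ) (hss : ∑ i, s i ^ 2 = μ)
    (hcs : ∑ i, c i * s i = 0) (e : ι → ℝ) :
    (∑ i, c i * e i) ^ 2 + (∑ i, s i * e i) ^ 2 ≤ μ * ∑ i, e i ^ 2 := by
  set a := ∑ i, c i * e i
  set b := ∑ i, s i * e i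
  -- Cauchy–Schwarz against `a c + b s`, whose inner product with `e` is `a² + b²`.
  have hinner : ∑ i, (c i * a + s i * b) * e i = a ^ 2 + b ^ 2 := by
    simp only [add_mul, Finset.sum_add_distrib, mul_right_comm _ _ (e _), ← Finset.sum_mul]
    ring
  have hcs_ineq := Finset.sum_mul_sq_le_sq_mul_sq Finset.univ (fun i => c i * a + s i * b) e
  rw [hinner, sum_sq_mul_add_mul hcc hss hcs, mul_right_comm, sq] at hcs_ineq
  have hμ : 0 ≤ μ := hcc ▸ Finset.sum_nonneg fun i _ => sq_nonneg (c i)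
  have he : 0 ≤ ∑ i, e i ^ 2 := Finset.sum_nonneg fun i _ => sq_nonneg (e i)
  rcases (add_nonneg (sq_nonneg a) (sq_nonneg b)).eq_or_lt with h0 | hpos
  · exact h0 ▸ mul_nonneg hμ he
  · exact le_of_mul_le_mul_right hcs_ineq hpos

theorem sum_sq_sum_mul_add_mul_le (hcc : ∑ i, c i ^ 2 = μ) (hss : ∑ i, s i ^ 2 = μ)
    (hcs : ∑ i, c i * s i = 0) (e : ι → ℝ) :
    ∑ i, (∑ j, (c i * c j + s i * s j) * e j) ^ 2 ≤ μ ^ 2 * ∑ j, e j ^ 2 := by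
  have hμ : 0 ≤ μ := hcc ▸ Finset.sum_nonneg fun i _ => sq_nonneg (c i)
  have hrow : ∀ i, ∑ j, (c i * c j + s i * s j) * e j
      = c i * ∑ j, c j * e j + s i * ∑ j, s j * e j := fun i => by
    simp only [add_mul, mul_assoc, Finset.sum_add_distrib, ← Finset.mul_sum]
  simp only [hrow, sum_sq_mul_add_mul hcc hss hcs]
  calc μ * ((∑ j, c j * e j) ^ 2 + (∑ j, s j * e j) ^ 2) ≤ μ * (μ * ∑ j, e j ^ 2) :=
        mul_le_mul_of_nonneg_left (sq_add_sq_sum_mul_le hcc hss hcs e) hμ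
    _ = μ ^ 2 * ∑ j, e j ^ 2 := by ring

end RankTwo

section ReluNetwork

variable {ι : Type*} [Fintype ι]

theorem sum_sq_relu_sub_le (W : ι → ι → ℝ) (V x y : ι → ℝ) :
    ∑ i, (max (∑ j, W i j * x j + V i) 0 - max (∑ j, W i j * y j + V i) 0) ^ 2
      ≤ ∑ i, (∑ j, W i j * (x j - y j)) ^ 2 := by
  refine Finset.sum_le_sum fun i _ => sq_le_sq.2 ?_
  calc _ ≤ |(∑ j, W i j * x j + V i) - (∑ j, W i j * y j + V i)| :=
        abs_max_sub_max_le_abs _ _ 0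
    _ = |∑ j, W i j * (x j - y j)| := by
        simp only [mul_sub, Finset.sum_sub_distrib, add_sub_add_right_eq_sub]

theorem tendsto_of_hasDerivAt_relu_network {W : ι → ι → ℝ} {V rb : ι → ℝ} {K : ℝ}
    (hK0 : 0 ≤ K) (hK : K < 1)
    (hW : ∀ z : ι → ℝ, ∑ i, (∑ j, W i j * z j) ^ 2 ≤ K ^ 2 * ∑ j, z j ^ 2)
    (hrb : ∀ i, max (∑ j, W i j * rb j + V i) 0 = rb i) {r : ι → ℝ → ℝ}
    (hr : ∀ i, ∀ t ≥ 0, HasDerivAt (r i) (-r i t + max (∑ j, W i j * r j t + V i) 0) t) :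
    Tendsto (fun t i => r i t) atTop (nhds rb) := by
  let G : EuclideanSpace ℝ ι → EuclideanSpace ℝ ι :=
    fun x => WithLp.toLp 2 fun i => max (∑ j, W i j * x j + V i) 0
  have hG : ∀ y, ‖G y - WithLp.toLp 2 rb‖ ≤ K * ‖y - WithLp.toLp 2 rb‖ := fun y => by
    refine (sq_le_sq₀ (norm_nonneg _) (by positivity)).1 ?_
    simp only [mul_pow, EuclideanSpace.norm_sq_eq, Real.norm_eq_abs, sq_abs, PiLp.sub_apply,
      G]
    simpa only [hrb] using (sum_sq_relu_sub_le W V y.ofLp rb).trans (hW _)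
  have hR : ∀ t ≥ 0, HasDerivAt (fun t => WithLp.toLp 2 fun i => r i t)
      (-(WithLp.toLp 2 fun i => r i t) + G (WithLp.toLp 2 fun i => r i t)) t := fun t ht => by
    refine ((PiLp.continuousLinearEquiv 2 ℝ fun _ : ι => ℝ).symm.hasFDerivAt.comp_hasDerivAt t
      (hasDerivAt_pi.2 fun i => hr i t ht)).congr_deriv ?_
    ext i
    simp [G]
  exact (PiLp.continuous_ofLp 2 _).continuousAt.tendsto.comp
    (tendsto_of_hasDerivAt_neg_add_contraction hK hG hR)

end ReluNetwork

theorem sum_filter_pos_sq {ι : Type*} [Fintype ι] (f : ι → ℝ) :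
    ∑ i ∈ Finset.univ.filter (fun i => 0 < f i), f i ^ 2 = ∑ i, f i * max (f i) 0 := by
  rw [Finset.sum_filter]
  refine Finset.sum_congr rfl fun i _ => ?_
  split_ifs with h
  · rw [max_eq_left h.le, sq]
  · rw [max_eq_right (not_lt.1 h), mul_zero]

theorem sum_cos_sub_mul {ι : Type*} [Fintype ι] (θ x : ι → ℝ) (i : ι) :
    ∑ j, cos (θ i - θ j) * x j
      = cos (θ i) * ∑ j, cos (θ j) * x j + sin (θ i) * ∑ j, sin (θ j) * x j := by
  simp only [cos_sub, add_mul, mul_assoc, Finset.sum_add_distrib, ← Finset.mul_sum]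

noncomputable def ringAngle (N : ℕ) (i : Fin N) : ℝ := 2 * π * i / N

namespace ringAngle

variable {N : ℕ}

theorem sum_exp_two_mul_mul_I (hN : 3 ≤ N) :
    ∑ i : Fin N, Complex.exp (↑(2 * ringAngle N i) * Complex.I) = 0 := by
  -- the terms are the powers of `ζ²` for a primitive `N`-th root of unity `ζ`, and `ζ² ≠ 1`
  set ζ := Complex.exp (2 * π * Complex.I / N)
  have hζ : IsPrimitiveRoot ζ N := Complex.isPrimitiveRoot_exp N (by omega)
  have hζ2 : ζ ^ 2 ≠ 1 := fun h =>
    absurd (Nat.le_of_dvd two_pos ((hζ.pow_eq_one_iff_dvd 2).1 h)) (by omega)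
  have hterm : ∀ i : ℕ, Complex.exp (↑(2 * (2 * π * i / N)) * Complex.I) = (ζ ^ 2) ^ i := by
    intro i
    rw [← pow_mul, ← Complex.exp_nat_mul]
    push_cast
    ring_nf
  simp only [ringAngle, hterm]
  rw [Fin.sum_univ_eq_sum_range (fun i => (ζ ^ 2) ^ i), geom_sum_eq hζ2, pow_right_comm,
    hζ.pow_eq_one, one_pow, sub_self, zero_div]

theorem sum_cos_two_mul (hN : 3 ≤ N) : ∑ i, cos (2 * ringAngle N i) = 0 := by
  simpa [← Complex.exp_ofReal_mul_I_re] using congrArg Complex.re (sum_exp_two_mul_mul_I hN)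

theorem sum_sin_two_mul (hN : 3 ≤ N) : ∑ i, sin (2 * ringAngle N i) = 0 := by
  simpa [← Complex.exp_ofReal_mul_I_im] using congrArg Complex.im (sum_exp_two_mul_mul_I hN)

theorem sum_cos_sq (hN : 3 ≤ N) : ∑ i, cos (ringAngle N i) ^ 2 = N / 2 := by
  simp only [cos_sq, Finset.sum_add_distrib, ← Finset.sum_div, sum_cos_two_mul hN]
  simp

theorem sum_sin_sq (hN : 3 ≤ N) : ∑ i, sin (ringAngle N i) ^ 2 = N / 2 := by
  simp only [sin_sq, Finset.sum_sub_distrib, sum_cos_sq hN, Finset.sum_const, Finset.card_univ,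
    Fintype.card_fin, nsmul_eq_mul, mul_one]
  ring

theorem sum_cos_mul_sin (hN : 3 ≤ N) : ∑ i, cos (ringAngle N i) * sin (ringAngle N i) = 0 := by
  have h : ∀ i, cos (ringAngle N i) * sin (ringAngle N i) = sin (2 * ringAngle N i) / 2 :=
    fun i => by rw [sin_two_mul]; ring
  simp only [h, ← Finset.sum_div, sum_sin_two_mul hN, zero_div]

theorem exists_neg_eq_nat_mul_two_pi_sub (i : Fin N) :
    ∃ k : ℕ, ringAngle N (-i) = k * (2 * π) - ringAngle N i := by
  have hN : (N : ℝ) ≠ 0 := Nat.cast_ne_zero.2 (Nat.pos_of_ne_zero fun h => (h ▸ i).elim0).ne'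
  rcases Nat.eq_zero_or_pos i with hi | hi
  · refine ⟨0, ?_⟩
    simp [ringAngle, Fin.val_neg', hi]
  · refine ⟨1, ?_⟩
    rw [ringAngle, ringAngle, Fin.val_neg', Nat.mod_eq_of_lt (by omega),
      Nat.cast_sub i.is_lt.le]
    field_simp
    ring

theorem cos_neg (i : Fin N) : cos (ringAngle N (-i)) = cos (ringAngle N i) := by
  obtain ⟨k, hk⟩ := exists_neg_eq_nat_mul_two_pi_sub i
  rw [hk, cos_nat_mul_two_pi_sub]

theorem sin_neg (i : Fin N) : sin (ringAngle N (-i)) = -sin (ringAngle N i) := by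
  obtain ⟨k, hk⟩ := exists_neg_eq_nat_mul_two_pi_sub i
  rw [hk, sin_nat_mul_two_pi_sub]

/-- The reflection `i ↦ -i` fixes the cosines and flips the sines. -/
theorem sum_sin_mul_comp_cos (g : ℝ → ℝ) :
    ∑ i, sin (ringAngle N i) * g (cos (ringAngle N i)) = 0 := by
  have h := Equiv.sum_comp (Equiv.neg (Fin N))
    fun i => sin (ringAngle N i) * g (cos (ringAngle N i))
  simp only [Equiv.neg_apply, sin_neg, cos_neg, neg_mul, Finset.sum_neg_distrib] at h
  linarith

theorem sum_sq_sum_cos_sub_mul_le (hN : 3 ≤ N) (z : Fin N → ℝ) :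
    ∑ i, (∑ j, cos (ringAngle N i - ringAngle N j) * z j) ^ 2
      ≤ (N / 2) ^ 2 * ∑ j, z j ^ 2 := by
  simp only [cos_sub]
  exact sum_sq_sum_mul_add_mul_le (sum_cos_sq hN) (sum_sin_sq hN) (sum_cos_mul_sin hN) z

/-- With `a = δ m` and `V = Pi.single 0 V₀` this is the bump `r̄` of the ring system. -/
noncomputable def bump (a : ℝ) (V : Fin N → ℝ) (j : Fin N) : ℝ :=
  a * max (cos (ringAngle N j)) 0 + V j

theorem sum_sin_mul_bump {i₀ : Fin N} (hi₀ : ringAngle N i₀ = 0) (a V₀ : ℝ) :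
    ∑ j, sin (ringAngle N j) * bump a (Pi.single i₀ V₀) j = 0 := by
  simp only [bump, mul_add, Finset.sum_add_distrib, mul_left_comm _ a, ← Finset.mul_sum,
    sum_sin_mul_comp_cos fun c => max c 0]
  simp [Pi.single_apply, hi₀]

theorem sum_cos_mul_bump {i₀ : Fin N} (hi₀ : ringAngle N i₀ = 0) (a V₀ : ℝ) :
    ∑ j, cos (ringAngle N j) * bump a (Pi.single i₀ V₀) j
      = a * ∑ j, cos (ringAngle N j) * max (cos (ringAngle N j)) 0 + V₀ := by
  simp only [bump, mul_add, Finset.sum_add_distrib, mul_left_comm _ a, ← Finset.mul_sum]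
  simp [Pi.single_apply, hi₀]

theorem max_sum_cos_sub_mul_bump {i₀ : Fin N} (hi₀ : ringAngle N i₀ = 0) {δ m V₀ : ℝ}
    (hδ : 0 ≤ δ) (hm : 0 ≤ m) (hV₀ : 0 ≤ V₀)
    (hmV : m = δ * m * ∑ j, cos (ringAngle N j) * max (cos (ringAngle N j)) 0 + V₀)
    (i : Fin N) :
    max (δ * ∑ j, cos (ringAngle N i - ringAngle N j) * bump (δ * m) (Pi.single i₀ V₀) j
      + (Pi.single i₀ V₀ : Fin N → ℝ) i) 0 = bump (δ * m) (Pi.single i₀ V₀) i := by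
  rw [sum_cos_sub_mul, sum_cos_mul_bump hi₀, sum_sin_mul_bump hi₀, ← hmV, bump]
  rcases eq_or_ne i i₀ with rfl | hi
  · simp only [hi₀, cos_zero, sin_zero, Pi.single_eq_same]
    rw [max_eq_left (by positivity), max_eq_left zero_le_one]
    ring
  · simp only [Pi.single_apply, if_neg hi, mul_zero, add_zero,
      mul_max_of_nonneg _ _ (mul_nonneg hδ hm)]
    ring_nf

theorem eq_bump {i₀ : Fin N} (hi₀ : ringAngle N i₀ = 0) {a V₀ : ℝ} {x : Fin N → ℝ}
    (hx₀ : x i₀ = a + V₀)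
    (hxpos : ∀ j, 0 < cos (ringAngle N j) → j ≠ i₀ → x j = a * cos (ringAngle N j))
    (hxnonpos : ∀ j, cos (ringAngle N j) ≤ 0 → x j = 0) :
    x = bump a (Pi.single i₀ V₀) := funext fun j => by
  rw [bump]
  rcases eq_or_ne j i₀ with rfl | hj₀
  · rw [hx₀, hi₀, cos_zero, max_eq_left zero_le_one, mul_one, Pi.single_eq_same]
  rw [Pi.single_apply, if_neg hj₀, add_zero]
  rcases lt_or_ge 0 (cos (ringAngle N j)) with hcos | hcos
  · rw [hxpos j hcos hj₀, max_eq_left hcos.le]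
  · rw [hxnonpos j hcos, max_eq_right hcos, mul_zero]

theorem tendsto_bump (hN : 3 ≤ N) {i₀ : Fin N} (hi₀ : ringAngle N i₀ = 0)
    {δ m V₀ : ℝ} (hδ : 0 ≤ δ) (hδN : δ * (N / 2) < 1) (hm : 0 ≤ m) (hV₀ : 0 ≤ V₀)
    (hmV : m = δ * m * ∑ j, cos (ringAngle N j) * max (cos (ringAngle N j)) 0 + V₀)
    {r : Fin N → ℝ → ℝ}
    (hr : ∀ i, ∀ t ≥ 0, HasDerivAt (r i) (-r i t + max (δ * ∑ j,
      cos (ringAngle N i - ringAngle N j) * r j t + (Pi.single i₀ V₀ : Fin N → ℝ) i) 0) t) :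
    Tendsto (fun t i => r i t) atTop (nhds (bump (δ * m) (Pi.single i₀ V₀))) := by
  refine tendsto_of_hasDerivAt_relu_network
    (W := fun i j => δ * cos (ringAngle N i - ringAngle N j)) (by positivity) hδN (fun z => ?_)
    (fun i => ?_) (by simpa only [Finset.mul_sum, mul_assoc] using hr)
  · simp only [mul_assoc, ← Finset.mul_sum, mul_pow]
    exact mul_le_mul_of_nonneg_left (sum_sq_sum_cos_sub_mul_le hN z) (sq_nonneg δ)
  · simpa only [Finset.mul_sum, mul_assoc] using max_sum_cos_sub_mul_bump hi₀ hδ hm hV₀ hmV i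

end ringAngle

open Classical in
/-- Local asymptotic stability of the bump stationary solution of the
`N`-dimensional ring system: with `P = {i : cos θ_i > 0}`,
`S_c = ∑_{i∈P} cos²θ_i`, `S_s = ∑_{i=1}^{N-1} sin²θ_i`, inputs `V₀ > 0` at
index `0` and `0` elsewhere, and `0 < δ < min (1/S_c) (1/S_s)`, the bump
`r̄` admits an open neighborhood `U` such that every solution starting in
`U` converges to `r̄`. -/
theorem stmt14 (N : ℕ) (hN : 3 ≤ N) (δ V₀ : ℝ) (hV₀ : 0 < V₀)
    (θ : Fin N → ℝ) (hθ : ∀ i : Fin N, θ i = 2 * π * i / N)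
    (V : Fin N → ℝ) (hV0 : V ⟨0, by omega⟩ = V₀)
    (hVi : ∀ i : Fin N, i ≠ ⟨0, by omega⟩ → V i = 0)
    (P : Finset (Fin N))
    (hP : P = Finset.univ.filter fun i => 0 < Real.cos (θ i))
    (Sc Ss : ℝ) (hSc : Sc = ∑ i ∈ P, Real.cos (θ i) ^ 2)
    (hSs : Ss = ∑ i ∈ Finset.univ.erase (⟨0, by omega⟩ : Fin N),
      Real.sin (θ i) ^ 2)
    (hδ0 : 0 < δ) (hδ : δ < min (1 / Sc) (1 / Ss))
    (m : ℝ) (hm : m = V₀ / (1 - δ * Sc))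
    (rb : Fin N → ℝ)
    (hrb0 : rb ⟨0, by omega⟩ = δ * m + V₀)
    (hrbP : ∀ j ∈ P, j ≠ (⟨0, by omega⟩ : Fin N) → rb j = δ * m * Real.cos (θ j))
    (hrbN : ∀ j : Fin N, j ∉ P → rb j = 0) :
    ∃ U : Set (Fin N → ℝ), IsOpen U ∧ rb ∈ U ∧
      ∀ r : Fin N → ℝ → ℝ,
        (∀ i : Fin N, ∀ t ≥ (0 : ℝ), HasDerivAt (r i)
          (-r i t + max (δ * ∑ j, Real.cos (θ i - θ j) * r j t + V i) 0) t) →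
        (fun i => r i 0) ∈ U →
        Tendsto (fun t => fun i => r i t) atTop (nhds rb) := by
  obtain rfl : θ = ringAngle N := funext hθ
  set i₀ : Fin N := ⟨0, by omega⟩
  have hi₀ : ringAngle N i₀ = 0 := by simp [ringAngle, i₀]
  have hmemP : ∀ j, j ∈ P ↔ 0 < cos (ringAngle N j) := by simp [hP]
  have hV : V = Pi.single i₀ V₀ := funext fun j => by
    rcases eq_or_ne j i₀ with rfl | hj
    · simp [hV0]
    · simp [hj, hVi j hj]
  have hSc1 : 1 ≤ Sc := by
    have h := Finset.single_le_sum (fun j _ => sq_nonneg (cos (ringAngle N j)))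
      ((hmemP i₀).2 (by simp [hi₀]))
    rwa [hi₀, cos_zero, one_pow, ← hSc] at h
  have hSs' : Ss = N / 2 := by
    rw [hSs, Finset.sum_erase_eq_sub (Finset.mem_univ _), ringAngle.sum_sin_sq hN, hi₀, sin_zero]
    ring
  have hδSc : δ * Sc < 1 := (lt_div_iff₀ (by linarith)).1 (hδ.trans_le (min_le_left _ _))
  have hδN : δ * (N / 2) < 1 :=
    (lt_div_iff₀ (by positivity)).1 (hSs' ▸ hδ.trans_le (min_le_right _ _))
  have hm0 : 0 < m := hm ▸ div_pos hV₀ (by linarith)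
  have hmV : m = δ * m * ∑ j, cos (ringAngle N j) * max (cos (ringAngle N j)) 0 + V₀ := by
    rw [← sum_filter_pos_sq, ← hP, ← hSc]
    rw [eq_div_iff (by linarith)] at hm
    linarith
  have hrb : rb = ringAngle.bump (δ * m) (Pi.single i₀ V₀) :=
    ringAngle.eq_bump hi₀ hrb0 (fun j hj hj₀ => hrbP j ((hmemP j).2 hj) hj₀)
      fun j hj => hrbN j fun hjP => (hj.trans_lt ((hmemP j).1 hjP)).false
  subst hV hrb
  exact ⟨Set.univ, isOpen_univ, Set.mem_univ _, fun r hr _ =>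
    ringAngle.tendsto_bump hN hi₀ hδ0.le hδN hm0.le hV₀.le hmV hr⟩
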